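/- Let f₁ and f₂ be real numbers with 0 < f₂ < f₁, and set φ̄ = arctan f₁ and k̄ = √(1 − f₂²/f₁²). Then ∫_{f₂}^{f₁} q² · arctan q / √((f₁² − q²)(q² − f₂²)) dq = (π/2) · f₁ · E(φ̄, k̄) − (π/2) · ( 1 − √(1 − k̄² sin²φ̄) ). -/

import Mathlib

open Real intervalIntegral

/-- Incomplete elliptic integral of the first kind `F(φ, k)`. -/
noncomputable def ellipticF (φ k : ℝ) : ℝ :=
  ∫ θ in (0:ℝ)..φ, (1 - k ^ 2 * Real.sin θ ^ 2) ^ (-(1:ℝ)/2)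

/-- Incomplete elliptic integral of the second kind `E(φ, k)`. -/
noncomputable def ellipticE (φ k : ℝ) : ℝ :=
  ∫ θ in (0:ℝ)..φ, (1 - k ^ 2 * Real.sin θ ^ 2) ^ ((1:ℝ)/2)

/-- Complete elliptic integral of the first kind `K(k)`. -/
noncomputable def completeK (k : ℝ) : ℝ := ellipticF (Real.pi / 2) k

/-- Complete elliptic integral of the second kind `E(k)`. -/
noncomputable def completeE (k : ℝ) : ℝ := ellipticE (Real.pi / 2) k

/-- Inverse hyperbolic tangent. -/
noncomputable def arctanh (x : ℝ) : ℝ := Real.log ((1 + x) / (1 - x)) / 2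

open MeasureTheory Set Filter Topology

set_option maxHeartbeats 1000000

namespace Stmt12AuxA

lemma arctan_eq_integral (q : ℝ) :
    (∫ t in (0:ℝ)..1, q / (1 + t^2 * q^2)) = Real.arctan q := by
  have h : ∀ t ∈ Set.uIcc (0:ℝ) 1, HasDerivAt (fun t => Real.arctan (t * q)) (q / (1 + t^2*q^2)) t := by
    intro t _
    have h1 : HasDerivAt (fun t : ℝ => t * q) q t := by
      simpa using (hasDerivAt_id t).mul_const q
    have h2 := (Real.hasDerivAt_arctan (t*q)).comp t h1
    refine h2.congr_deriv (Eq.symm ?_)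
    rw [mul_pow, one_div, inv_mul_eq_div]
  have hint : IntervalIntegrable (fun t => q / (1 + t^2*q^2)) volume 0 1 := by
    apply Continuous.intervalIntegrable
    have hne : ∀ t:ℝ, 1 + t^2*q^2 ≠ 0 := fun t => by positivity
    exact continuous_const.div (by continuity) hne
  simpa using intervalIntegral.integral_eq_sub_of_hasDerivAt h hint

end Stmt12AuxA

namespace Stmt12AuxB

variable {f₁ f₂ : ℝ}

lemma Xpos (h0 : 0 < f₂) {q : ℝ} (hq : q ∈ Ioo f₂ f₁) :
    0 < (f₁^2 - q^2) * (q^2 - f₂^2) := by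
  have h1 : 0 < f₁^2 - q^2 := by nlinarith [hq.1, hq.2]
  have h2 : 0 < q^2 - f₂^2 := by nlinarith [hq.1, hq.2]
  positivity

lemma gmeas : Measurable fun q : ℝ => 1 / Real.sqrt ((f₁^2 - q^2) * (q^2 - f₂^2)) := by
  apply Measurable.div measurable_const
  exact (Real.continuous_sqrt.comp (by continuity)).measurable

lemma g_integrable (h0 : 0 < f₂) (h21 : f₂ < f₁) :
    IntervalIntegrable (fun q => 1 / Real.sqrt ((f₁^2 - q^2) * (q^2 - f₂^2))) volume f₂ f₁ := by
  set m := (f₂ + f₁)/2 with hm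
  have hf2m : f₂ < m := by rw [hm]; linarith
  have hmf1 : m < f₁ := by rw [hm]; linarith
  have hm0 : 0 < m := by linarith
  -- part 1
  have base1 : IntervalIntegrable (fun x => (x - f₂) ^ (-(1/2) : ℝ)) volume f₂ m := by
    have h := intervalIntegrable_rpow' (a := (0:ℝ)) (b := m - f₂) (r := -(1/2)) (by norm_num)
    have h2 := h.comp_sub_right f₂
    simpa using h2
  have part1 : IntervalIntegrable (fun q => 1 / Real.sqrt ((f₁^2 - q^2) * (q^2 - f₂^2))) volume f₂ m := by
    set K : ℝ := (f₁^2 - m^2) * (2*f₂) with hK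
    have hKpos : 0 < K := by
      have h1 : 0 < f₁^2 - m^2 := by nlinarith
      rw [hK]; positivity
    apply (base1.const_mul (1 / Real.sqrt K)).mono_fun (gmeas.aestronglyMeasurable)
    filter_upwards [ae_restrict_mem measurableSet_uIoc] with q hq
    rw [uIoc_of_le hf2m.le] at hq
    have hq1 : f₂ < q := hq.1
    have hq2 : q ≤ m := hq.2
    have hqf2 : (0:ℝ) < q - f₂ := by linarith
    have e2 : 2*f₂*(q - f₂) ≤ q^2 - f₂^2 := by nlinarith
    have e1 : f₁^2 - m^2 ≤ f₁^2 - q^2 := by nlinarith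
    have hXq : K * (q - f₂) ≤ (f₁^2 - q^2)*(q^2 - f₂^2) := by
      calc K * (q - f₂) = (f₁^2 - m^2) * (2*f₂*(q - f₂)) := by rw [hK]; ring
        _ ≤ (f₁^2 - q^2) * (2*f₂*(q - f₂)) := by
            apply mul_le_mul_of_nonneg_right e1; positivity
        _ ≤ (f₁^2 - q^2) * (q^2 - f₂^2) := by
            apply mul_le_mul_of_nonneg_left e2; nlinarith
    have hsK : 0 < Real.sqrt (K * (q - f₂)) := Real.sqrt_pos.2 (by positivity)
    have hle : 1 / Real.sqrt ((f₁^2 - q^2) * (q^2 - f₂^2)) ≤ 1 / Real.sqrt (K * (q - f₂)) :=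
      one_div_le_one_div_of_le hsK (Real.sqrt_le_sqrt hXq)
    have hrw : (1 / Real.sqrt K) * ((q - f₂) ^ (-(1/2) : ℝ)) = 1 / Real.sqrt (K * (q - f₂)) := by
      rw [Real.rpow_neg hqf2.le, ← Real.sqrt_eq_rpow, Real.sqrt_mul hKpos.le, one_div, one_div,
        mul_inv]
    have hnn : 0 ≤ 1 / Real.sqrt ((f₁^2 - q^2) * (q^2 - f₂^2)) := by positivity
    rw [Real.norm_eq_abs, Real.norm_eq_abs, abs_of_nonneg hnn]
    calc 1 / Real.sqrt ((f₁^2 - q^2) * (q^2 - f₂^2)) ≤ 1 / Real.sqrt (K * (q - f₂)) := hle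
      _ = (1 / Real.sqrt K) * ((q - f₂) ^ (-(1/2) : ℝ)) := hrw.symm
      _ ≤ |(1 / Real.sqrt K) * ((q - f₂) ^ (-(1/2) : ℝ))| := le_abs_self _
  -- part 2
  have base2 : IntervalIntegrable (fun x => (f₁ - x) ^ (-(1/2) : ℝ)) volume m f₁ := by
    have h := intervalIntegrable_rpow' (a := (0:ℝ)) (b := f₁ - m) (r := -(1/2)) (by norm_num)
    have h2 := h.comp_sub_left f₁
    simpa using h2.symm
  have part2 : IntervalIntegrable (fun q => 1 / Real.sqrt ((f₁^2 - q^2) * (q^2 - f₂^2))) volume m f₁ := by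
    set K : ℝ := f₁ * (m^2 - f₂^2) with hK
    have hKpos : 0 < K := by
      have h1 : 0 < m^2 - f₂^2 := by nlinarith
      have h2 : 0 < f₁ := by linarith
      rw [hK]; positivity
    apply (base2.const_mul (1 / Real.sqrt K)).mono_fun (gmeas.aestronglyMeasurable)
    filter_upwards [ae_restrict_mem measurableSet_uIoc] with q hq
    rw [uIoc_of_le hmf1.le] at hq
    have hq1 : m < q := hq.1
    have hq2 : q ≤ f₁ := hq.2
    rcases eq_or_lt_of_le hq2 with rfl | hq2'
    · have hX0 : (q^2 - q^2) * (q^2 - f₂^2) = 0 := by ring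
      rw [hX0]
      simp [Real.zero_rpow]
    · have hqf1 : (0:ℝ) < f₁ - q := by linarith
      have e1 : m^2 - f₂^2 ≤ q^2 - f₂^2 := by nlinarith
      have e2 : f₁*(f₁ - q) ≤ f₁^2 - q^2 := by nlinarith
      have hXq : K * (f₁ - q) ≤ (f₁^2 - q^2)*(q^2 - f₂^2) := by
        calc K * (f₁ - q) = (f₁*(f₁ - q)) * (m^2 - f₂^2) := by rw [hK]; ring
          _ ≤ (f₁^2 - q^2) * (m^2 - f₂^2) := by
              apply mul_le_mul_of_nonneg_right e2; nlinarith
          _ ≤ (f₁^2 - q^2) * (q^2 - f₂^2) := by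
              apply mul_le_mul_of_nonneg_left e1; nlinarith
      have hsK : 0 < Real.sqrt (K * (f₁ - q)) := Real.sqrt_pos.2 (by positivity)
      have hle : 1 / Real.sqrt ((f₁^2 - q^2) * (q^2 - f₂^2)) ≤ 1 / Real.sqrt (K * (f₁ - q)) :=
        one_div_le_one_div_of_le hsK (Real.sqrt_le_sqrt hXq)
      have hrw : (1 / Real.sqrt K) * ((f₁ - q) ^ (-(1/2) : ℝ)) = 1 / Real.sqrt (K * (f₁ - q)) := by
        rw [Real.rpow_neg hqf1.le, ← Real.sqrt_eq_rpow, Real.sqrt_mul hKpos.le, one_div, one_div,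
          mul_inv]
      have hnn : 0 ≤ 1 / Real.sqrt ((f₁^2 - q^2) * (q^2 - f₂^2)) := by positivity
      rw [Real.norm_eq_abs, Real.norm_eq_abs, abs_of_nonneg hnn]
      calc 1 / Real.sqrt ((f₁^2 - q^2) * (q^2 - f₂^2)) ≤ 1 / Real.sqrt (K * (f₁ - q)) := hle
        _ = (1 / Real.sqrt K) * ((f₁ - q) ^ (-(1/2) : ℝ)) := hrw.symm
        _ ≤ |(1 / Real.sqrt K) * ((f₁ - q) ^ (-(1/2) : ℝ))| := le_abs_self _
  exact part1.trans part2

lemma integrable_of_bound (h0 : 0 < f₂) (h21 : f₂ < f₁) {h : ℝ → ℝ}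
    (hm : AEStronglyMeasurable h (volume.restrict (uIoc f₂ f₁))) {C : ℝ} (hC : 0 ≤ C)
    (hb : ∀ q ∈ Ioc f₂ f₁, ‖h q‖ ≤ C * (1 / Real.sqrt ((f₁^2 - q^2)*(q^2 - f₂^2)))) :
    IntervalIntegrable h volume f₂ f₁ := by
  apply ((g_integrable h0 h21).const_mul C).mono_fun hm
  filter_upwards [ae_restrict_mem measurableSet_uIoc] with q hq
  rw [uIoc_of_le h21.le] at hq
  calc ‖h q‖ ≤ C * (1 / Real.sqrt ((f₁^2 - q^2)*(q^2 - f₂^2))) := hb q hq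
    _ ≤ ‖C * (1 / Real.sqrt ((f₁^2 - q^2)*(q^2 - f₂^2)))‖ := by
        rw [Real.norm_eq_abs]; exact le_abs_self _

end Stmt12AuxB

namespace Stmt12AuxC

-- copy-free: assume B-lemmas exist; for testing import by concatenation later.
variable {f₁ f₂ : ℝ}

lemma smeas : Continuous fun q : ℝ => Real.sqrt ((f₁^2 - q^2) * (q^2 - f₂^2)) :=
  Real.continuous_sqrt.comp (by continuity)

lemma Xpos (h0 : 0 < f₂) {q : ℝ} (hq : q ∈ Ioo f₂ f₁) :
    0 < (f₁^2 - q^2) * (q^2 - f₂^2) := by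
  have h1 : 0 < f₁^2 - q^2 := by nlinarith [hq.1, hq.2]
  have h2 : 0 < q^2 - f₂^2 := by nlinarith [hq.1, hq.2]
  positivity

lemma sqrt_one_sub_sq (h0 : 0 < f₂) (h21 : f₂ < f₁) {q : ℝ} (hq : q ∈ Ioo f₂ f₁) :
    Real.sqrt (1 - ((2*q^2 - f₂^2 - f₁^2)/(f₁^2 - f₂^2))^2)
      = 2 * Real.sqrt ((f₁^2 - q^2) * (q^2 - f₂^2)) / (f₁^2 - f₂^2) := by
  have hBA : (0:ℝ) < f₁^2 - f₂^2 := by nlinarith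
  have hX := Xpos h0 hq
  have h4 : 1 - ((2*q^2 - f₂^2 - f₁^2)/(f₁^2 - f₂^2))^2
      = (2 * Real.sqrt ((f₁^2 - q^2) * (q^2 - f₂^2)) / (f₁^2 - f₂^2))^2 := by
    rw [div_pow, div_pow, mul_pow, Real.sq_sqrt hX.le]
    field_simp
    ring
  rw [h4, Real.sqrt_sq (by positivity)]

lemma I1 (h0 : 0 < f₂) (h21 : f₂ < f₁) :
    ∫ q in f₂..f₁, q / Real.sqrt ((f₁^2 - q^2) * (q^2 - f₂^2)) = Real.pi / 2 := by
  have hBA : (0:ℝ) < f₁^2 - f₂^2 := by nlinarith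
  have hint : IntervalIntegrable (fun q => q / Real.sqrt ((f₁^2 - q^2) * (q^2 - f₂^2))) volume f₂ f₁ := by
    have hmeas : AEStronglyMeasurable (fun q => q / Real.sqrt ((f₁^2 - q^2) * (q^2 - f₂^2)))
        (volume.restrict (uIoc f₂ f₁)) :=
      (measurable_id.div smeas.measurable).aestronglyMeasurable
    refine Stmt12AuxB.integrable_of_bound h0 h21 hmeas (le_of_lt (lt_trans h0 h21)) ?_
    intro q hq
    have hq0 : 0 < q := lt_trans h0 hq.1
    have hs : 0 ≤ Real.sqrt ((f₁^2 - q^2) * (q^2 - f₂^2)) := Real.sqrt_nonneg _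
    rw [Real.norm_eq_abs, abs_of_nonneg (by positivity), mul_one_div]
    rcases eq_or_lt_of_le hs with hs0 | hs0
    · rw [← hs0, div_zero, div_zero]
    · exact div_le_div₀ (by linarith) hq.2 hs0 le_rfl
  set Φ : ℝ → ℝ := fun q => Real.arcsin ((2*q^2 - f₂^2 - f₁^2)/(f₁^2 - f₂^2)) / 2 with hΦ
  have hcont : ContinuousOn Φ (Icc f₂ f₁) :=
    ((Real.continuous_arcsin.comp (by continuity)).div_const 2).continuousOn
  have hderiv : ∀ q ∈ Ioo f₂ f₁,
      HasDerivAt Φ (q / Real.sqrt ((f₁^2 - q^2) * (q^2 - f₂^2))) q := by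
    intro q hq
    have hX := Xpos h0 hq
    have hsX : 0 < Real.sqrt ((f₁^2 - q^2) * (q^2 - f₂^2)) := Real.sqrt_pos.2 hX
    have hx1 : (2*q^2 - f₂^2 - f₁^2)/(f₁^2 - f₂^2) ≠ -1 := by
      rw [ne_eq, div_eq_iff hBA.ne']
      intro h
      nlinarith [hq.1, hq.2]
    have hx2 : (2*q^2 - f₂^2 - f₁^2)/(f₁^2 - f₂^2) ≠ 1 := by
      rw [ne_eq, div_eq_iff hBA.ne']
      intro h
      nlinarith [hq.1, hq.2]
    have hu : HasDerivAt (fun q : ℝ => (2*q^2 - f₂^2 - f₁^2)/(f₁^2 - f₂^2))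
        (4*q/(f₁^2 - f₂^2)) q := by
      have h1 : HasDerivAt (fun q : ℝ => 2*q^2 - f₂^2 - f₁^2) (4*q) q := by
        have h2 := (((hasDerivAt_pow 2 q).const_mul (2:ℝ)).sub_const (f₂^2)).sub_const (f₁^2)
        refine h2.congr_deriv (Eq.symm ?_)
        push_cast; ring
      exact h1.div_const _
    have hAr := ((Real.hasDerivAt_arcsin hx1 hx2).comp q hu).div_const 2
    refine hAr.congr_deriv (Eq.symm ?_)
    rw [sqrt_one_sub_sq h0 h21 hq]
    field_simp
    ring
  have heval := intervalIntegral.integral_eq_sub_of_hasDeriv_right_of_le h21.le hcont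
    (fun q hq => (hderiv q hq).hasDerivWithinAt) hint
  rw [heval, hΦ]
  have e1 : (2*f₁^2 - f₂^2 - f₁^2)/(f₁^2 - f₂^2) = 1 := by
    rw [div_eq_one_iff_eq hBA.ne']; ring
  have e2 : (2*f₂^2 - f₂^2 - f₁^2)/(f₁^2 - f₂^2) = -1 := by
    rw [div_eq_iff hBA.ne']; ring
  simp only [e1, e2, Real.arcsin_one, Real.arcsin_neg_one]
  ring

end Stmt12AuxC

namespace Stmt12AuxD

variable {f₁ f₂ : ℝ}

set_option maxHeartbeats 2000000 in
lemma I2 (h0 : 0 < f₂) (h21 : f₂ < f₁) {c : ℝ} (hc : 0 < c) :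
    ∫ q in f₂..f₁, q / ((c + q^2) * Real.sqrt ((f₁^2 - q^2) * (q^2 - f₂^2)))
      = Real.pi / (2 * Real.sqrt ((c + f₂^2) * (c + f₁^2))) := by
  have hBA : (0:ℝ) < f₁^2 - f₂^2 := by nlinarith
  have hD : (0:ℝ) < (c + f₂^2) * (c + f₁^2) := by positivity
  set d : ℝ := Real.sqrt ((c + f₂^2) * (c + f₁^2)) with hd
  have hdpos : 0 < d := Real.sqrt_pos.2 hD
  have hd2 : d^2 = (c + f₂^2) * (c + f₁^2) := Real.sq_sqrt hD.le
  have hint : IntervalIntegrable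
      (fun q => q / ((c + q^2) * Real.sqrt ((f₁^2 - q^2) * (q^2 - f₂^2)))) volume f₂ f₁ := by
    have hmeas : AEStronglyMeasurable
        (fun q => q / ((c + q^2) * Real.sqrt ((f₁^2 - q^2) * (q^2 - f₂^2))))
        (volume.restrict (uIoc f₂ f₁)) :=
      (measurable_id.div ((measurable_const.add (measurable_id.pow_const 2)).mul
        Stmt12AuxC.smeas.measurable)).aestronglyMeasurable
    refine Stmt12AuxB.integrable_of_bound h0 h21 hmeas
      (C := f₁ / c) (by have h1 : 0 < f₁ := lt_trans h0 h21; positivity) ?_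
    intro q hq
    have hq0 : 0 < q := lt_trans h0 hq.1
    have hs : 0 ≤ Real.sqrt ((f₁^2 - q^2) * (q^2 - f₂^2)) := Real.sqrt_nonneg _
    rw [Real.norm_eq_abs, abs_of_nonneg (by positivity), mul_one_div]
    rcases eq_or_lt_of_le hs with hs0 | hs0
    · rw [← hs0, mul_zero, div_zero, div_zero]
    · have h1 : c * Real.sqrt ((f₁^2 - q^2) * (q^2 - f₂^2))
          ≤ (c + q^2) * Real.sqrt ((f₁^2 - q^2) * (q^2 - f₂^2)) := by nlinarith
      calc q / ((c + q^2) * Real.sqrt ((f₁^2 - q^2) * (q^2 - f₂^2)))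
          ≤ f₁ / (c * Real.sqrt ((f₁^2 - q^2) * (q^2 - f₂^2))) :=
            div_le_div₀ (by linarith) hq.2 (by positivity) h1
        _ = f₁ / c / Real.sqrt ((f₁^2 - q^2) * (q^2 - f₂^2)) := by rw [div_div]
  have hdenpos : ∀ x : ℝ, 0 < (f₁^2 - f₂^2)*(x^2 + c) :=
    fun x => mul_pos hBA (by positivity)
  have hcont : ContinuousOn (fun x => -Real.arcsin ((2*f₂^2*f₁^2 + (f₂^2 + f₁^2)*c
      - (f₂^2 + f₁^2 + 2*c)*x^2) / ((f₁^2 - f₂^2)*(x^2 + c))) / (2*d)) (Icc f₂ f₁) := by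
    apply ContinuousOn.div_const
    apply ContinuousOn.neg
    apply Continuous.continuousOn
    apply Real.continuous_arcsin.comp
    exact (by continuity : Continuous fun x : ℝ => 2*f₂^2*f₁^2 + (f₂^2 + f₁^2)*c
      - (f₂^2 + f₁^2 + 2*c)*x^2).div (by continuity) (fun x => (hdenpos x).ne')
  have hderiv : ∀ q ∈ Ioo f₂ f₁,
      HasDerivAt (fun x => -Real.arcsin ((2*f₂^2*f₁^2 + (f₂^2 + f₁^2)*c
        - (f₂^2 + f₁^2 + 2*c)*x^2) / ((f₁^2 - f₂^2)*(x^2 + c))) / (2*d))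
        (q / ((c + q^2) * Real.sqrt ((f₁^2 - q^2) * (q^2 - f₂^2)))) q := by
    intro q hq
    have hX := Stmt12AuxC.Xpos h0 hq
    set s : ℝ := Real.sqrt ((f₁^2 - q^2) * (q^2 - f₂^2)) with hs
    have hspos : 0 < s := Real.sqrt_pos.2 hX
    have hs2 : s^2 = (f₁^2 - q^2) * (q^2 - f₂^2) := Real.sq_sqrt hX.le
    have hdq : (0:ℝ) < (f₁^2 - f₂^2)*(q^2 + c) := hdenpos q
    have key : ((f₁^2 - f₂^2)*(q^2 + c))^2
        - (2*f₂^2*f₁^2 + (f₂^2 + f₁^2)*c - (f₂^2 + f₁^2 + 2*c)*q^2)^2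
        = 4*((c + f₂^2)*(c + f₁^2))*((f₁^2 - q^2)*(q^2 - f₂^2)) := by ring
    have h5 : ((2*f₂^2*f₁^2 + (f₂^2 + f₁^2)*c - (f₂^2 + f₁^2 + 2*c)*q^2)
        / ((f₁^2 - f₂^2)*(q^2 + c)))^2 < 1 := by
      rw [div_pow, div_lt_one (pow_pos hdq 2)]
      have hpos4 : 0 < 4*((c + f₂^2)*(c + f₁^2))*((f₁^2 - q^2)*(q^2 - f₂^2)) :=
        mul_pos (by positivity) hX
      linarith [key, hpos4]
    have hy1 : (2*f₂^2*f₁^2 + (f₂^2 + f₁^2)*c - (f₂^2 + f₁^2 + 2*c)*q^2)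
        / ((f₁^2 - f₂^2)*(q^2 + c)) ≠ -1 := by intro h; rw [h] at h5; norm_num at h5
    have hy2 : (2*f₂^2*f₁^2 + (f₂^2 + f₁^2)*c - (f₂^2 + f₁^2 + 2*c)*q^2)
        / ((f₁^2 - f₂^2)*(q^2 + c)) ≠ 1 := by intro h; rw [h] at h5; norm_num at h5
    have hNder : HasDerivAt (fun x : ℝ => 2*f₂^2*f₁^2 + (f₂^2 + f₁^2)*c
        - (f₂^2 + f₁^2 + 2*c)*x^2) (-((f₂^2 + f₁^2 + 2*c)*(2*q))) q := by
      have h2 := ((hasDerivAt_pow 2 q).const_mul (f₂^2 + f₁^2 + 2*c)).const_sub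
        (2*f₂^2*f₁^2 + (f₂^2 + f₁^2)*c)
      refine h2.congr_deriv (Eq.symm ?_)
      push_cast; ring
    have hDender : HasDerivAt (fun x : ℝ => (f₁^2 - f₂^2)*(x^2 + c))
        ((f₁^2 - f₂^2)*(2*q)) q := by
      have h2 := ((hasDerivAt_pow 2 q).add_const c).const_mul (f₁^2 - f₂^2)
      refine h2.congr_deriv (Eq.symm ?_)
      push_cast; ring
    have hy := hNder.div hDender hdq.ne'
    have hsq : Real.sqrt (1 - ((2*f₂^2*f₁^2 + (f₂^2 + f₁^2)*c - (f₂^2 + f₁^2 + 2*c)*q^2)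
        / ((f₁^2 - f₂^2)*(q^2 + c)))^2) = 2*d*s/((f₁^2 - f₂^2)*(q^2 + c)) := by
      have h6 : 1 - ((2*f₂^2*f₁^2 + (f₂^2 + f₁^2)*c - (f₂^2 + f₁^2 + 2*c)*q^2)
          / ((f₁^2 - f₂^2)*(q^2 + c)))^2 = (2*d*s/((f₁^2 - f₂^2)*(q^2 + c)))^2 := by
        have e : (2*d*s/((f₁^2 - f₂^2)*(q^2 + c)))^2
            = 4*((c + f₂^2)*(c + f₁^2))*((f₁^2 - q^2)*(q^2 - f₂^2))
              / ((f₁^2 - f₂^2)*(q^2 + c))^2 := by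
          rw [div_pow, mul_pow, mul_pow, hd2, hs2]; norm_num
        rw [e, ← key, div_pow]
        field_simp
      rw [h6, Real.sqrt_sq (by positivity)]
    have hAr := ((Real.hasDerivAt_arcsin hy1 hy2).comp q hy).neg.div_const (2*d)
    refine hAr.congr_deriv (Eq.symm ?_)
    rw [hsq]
    have hdne : d ≠ 0 := hdpos.ne'
    have hsne : s ≠ 0 := hspos.ne'
    have hcq : (c + q^2) ≠ 0 := by positivity
    have hdqne : ((f₁^2 - f₂^2)*(q^2 + c)) ≠ 0 := hdq.ne'
    field_simp
    linear_combination (2*q*(q^2 + c)) * hd2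
  have heval := intervalIntegral.integral_eq_sub_of_hasDeriv_right_of_le h21.le hcont
    (fun q hq => (hderiv q hq).hasDerivWithinAt) hint
  rw [heval]
  have ha : (2*f₂^2*f₁^2 + (f₂^2 + f₁^2)*c - (f₂^2 + f₁^2 + 2*c)*f₂^2)
      / ((f₁^2 - f₂^2)*(f₂^2 + c)) = 1 := by
    rw [div_eq_one_iff_eq (hdenpos f₂).ne']; ring
  have hb : (2*f₂^2*f₁^2 + (f₂^2 + f₁^2)*c - (f₂^2 + f₁^2 + 2*c)*f₁^2)
      / ((f₁^2 - f₂^2)*(f₁^2 + c)) = -1 := by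
    rw [div_eq_iff (hdenpos f₁).ne']; ring
  rw [ha, hb, Real.arcsin_one, Real.arcsin_neg_one]
  field_simp
  ring

end Stmt12AuxD

namespace Stmt12AuxE

variable {f₁ f₂ : ℝ}

lemma int_J1 (h0 : 0 < f₂) (h21 : f₂ < f₁) :
    IntervalIntegrable (fun q => q / Real.sqrt ((f₁^2 - q^2) * (q^2 - f₂^2))) volume f₂ f₁ := by
  have hmeas : AEStronglyMeasurable (fun q => q / Real.sqrt ((f₁^2 - q^2) * (q^2 - f₂^2)))
      (volume.restrict (uIoc f₂ f₁)) :=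
    (measurable_id.div Stmt12AuxC.smeas.measurable).aestronglyMeasurable
  refine Stmt12AuxB.integrable_of_bound h0 h21 hmeas (le_of_lt (lt_trans h0 h21)) ?_
  intro q hq
  have hq0 : 0 < q := lt_trans h0 hq.1
  have hs : 0 ≤ Real.sqrt ((f₁^2 - q^2) * (q^2 - f₂^2)) := Real.sqrt_nonneg _
  rw [Real.norm_eq_abs, abs_of_nonneg (by positivity), mul_one_div]
  rcases eq_or_lt_of_le hs with hs0 | hs0
  · rw [← hs0, div_zero, div_zero]
  · exact div_le_div₀ (by linarith) hq.2 hs0 le_rfl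

lemma int_J2 (h0 : 0 < f₂) (h21 : f₂ < f₁) {c : ℝ} (hc : 0 < c) :
    IntervalIntegrable
      (fun q => q / ((c + q^2) * Real.sqrt ((f₁^2 - q^2) * (q^2 - f₂^2)))) volume f₂ f₁ := by
  have hmeas : AEStronglyMeasurable
      (fun q => q / ((c + q^2) * Real.sqrt ((f₁^2 - q^2) * (q^2 - f₂^2))))
      (volume.restrict (uIoc f₂ f₁)) :=
    (measurable_id.div ((measurable_const.add (measurable_id.pow_const 2)).mul
      Stmt12AuxC.smeas.measurable)).aestronglyMeasurable
  refine Stmt12AuxB.integrable_of_bound h0 h21 hmeas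
    (C := f₁ / c) (by have h1 : 0 < f₁ := lt_trans h0 h21; positivity) ?_
  intro q hq
  have hq0 : 0 < q := lt_trans h0 hq.1
  have hs : 0 ≤ Real.sqrt ((f₁^2 - q^2) * (q^2 - f₂^2)) := Real.sqrt_nonneg _
  rw [Real.norm_eq_abs, abs_of_nonneg (by positivity), mul_one_div]
  rcases eq_or_lt_of_le hs with hs0 | hs0
  · rw [← hs0, mul_zero, div_zero, div_zero]
  · have h1 : c * Real.sqrt ((f₁^2 - q^2) * (q^2 - f₂^2))
        ≤ (c + q^2) * Real.sqrt ((f₁^2 - q^2) * (q^2 - f₂^2)) := by nlinarith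
    calc q / ((c + q^2) * Real.sqrt ((f₁^2 - q^2) * (q^2 - f₂^2)))
        ≤ f₁ / (c * Real.sqrt ((f₁^2 - q^2) * (q^2 - f₂^2))) :=
          div_le_div₀ (by linarith) hq.2 (by positivity) h1
      _ = f₁ / c / Real.sqrt ((f₁^2 - q^2) * (q^2 - f₂^2)) := by rw [div_div]

lemma inner_eval (h0 : 0 < f₂) (h21 : f₂ < f₁) {t : ℝ} (ht : 0 < t) :
    ∫ q in f₂..f₁, q^3 / ((1 + t^2*q^2) * Real.sqrt ((f₁^2 - q^2) * (q^2 - f₂^2)))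
      = Real.pi/2 * ((1 - 1/(Real.sqrt (1 + f₂^2*t^2) * Real.sqrt (1 + f₁^2*t^2))) / t^2) := by
  have hc : (0:ℝ) < 1/t^2 := by positivity
  have htne : (t:ℝ) ≠ 0 := ht.ne'
  have hpt : ∀ q : ℝ, q^3 / ((1 + t^2*q^2) * Real.sqrt ((f₁^2 - q^2) * (q^2 - f₂^2)))
      = (1/t^2) * (q / Real.sqrt ((f₁^2 - q^2) * (q^2 - f₂^2)))
        - (1/t^4) * (q / ((1/t^2 + q^2) * Real.sqrt ((f₁^2 - q^2) * (q^2 - f₂^2)))) := by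
    intro q
    rcases eq_or_ne (Real.sqrt ((f₁^2 - q^2) * (q^2 - f₂^2))) 0 with hs0 | hs0
    · rw [hs0, mul_zero, mul_zero, div_zero, div_zero, mul_zero, mul_zero]
      ring
    · have h1 : (1:ℝ) + t^2*q^2 ≠ 0 := by positivity
      have h2 : (1:ℝ)/t^2 + q^2 ≠ 0 := by positivity
      field_simp
      ring
  calc (∫ q in f₂..f₁, q^3 / ((1 + t^2*q^2) * Real.sqrt ((f₁^2 - q^2) * (q^2 - f₂^2))))
      = ∫ q in f₂..f₁, ((1/t^2) * (q / Real.sqrt ((f₁^2 - q^2) * (q^2 - f₂^2)))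
        - (1/t^4) * (q / ((1/t^2 + q^2) * Real.sqrt ((f₁^2 - q^2) * (q^2 - f₂^2))))) := by
        apply intervalIntegral.integral_congr
        intro q _
        exact hpt q
    _ = (1/t^2) * (∫ q in f₂..f₁, q / Real.sqrt ((f₁^2 - q^2) * (q^2 - f₂^2)))
        - (1/t^4) * (∫ q in f₂..f₁, q / ((1/t^2 + q^2) * Real.sqrt ((f₁^2 - q^2) * (q^2 - f₂^2)))) := by
        rw [intervalIntegral.integral_sub ((int_J1 h0 h21).const_mul _)
          ((int_J2 h0 h21 hc).const_mul _), intervalIntegral.integral_const_mul,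
          intervalIntegral.integral_const_mul]
    _ = (1/t^2) * (Real.pi/2)
        - (1/t^4) * (Real.pi / (2 * Real.sqrt ((1/t^2 + f₂^2) * (1/t^2 + f₁^2)))) := by
        rw [Stmt12AuxC.I1 h0 h21, Stmt12AuxD.I2 h0 h21 hc]
    _ = Real.pi/2 * ((1 - 1/(Real.sqrt (1 + f₂^2*t^2) * Real.sqrt (1 + f₁^2*t^2))) / t^2) := by
        have hcomb : Real.sqrt ((1/t^2 + f₂^2) * (1/t^2 + f₁^2))
            = Real.sqrt (1 + f₂^2*t^2) * Real.sqrt (1 + f₁^2*t^2) / t^2 := by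
          have e : (1/t^2 + f₂^2) * (1/t^2 + f₁^2)
              = ((1 + f₂^2*t^2) * (1 + f₁^2*t^2)) / (t^2)^2 := by
            field_simp
          rw [e, Real.sqrt_div (by positivity), Real.sqrt_sq (by positivity),
            Real.sqrt_mul (by positivity)]
        rw [hcomb]
        have hs1 : (0:ℝ) < Real.sqrt (1 + f₂^2*t^2) := Real.sqrt_pos.2 (by positivity)
        have hs2 : (0:ℝ) < Real.sqrt (1 + f₁^2*t^2) := Real.sqrt_pos.2 (by positivity)
        field_simp

end Stmt12AuxE

namespace Stmt12AuxF

variable {f₁ f₂ : ℝ}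

lemma lhs_eq (h0 : 0 < f₂) (h21 : f₂ < f₁) :
    (∫ q in f₂..f₁, q^2 * Real.arctan q / Real.sqrt ((f₁^2 - q^2) * (q^2 - f₂^2)))
      = ∫ t in (0:ℝ)..1,
          Real.pi/2 * ((1 - 1/(Real.sqrt (1 + f₂^2*t^2) * Real.sqrt (1 + f₁^2*t^2))) / t^2) := by
  have hf1 : 0 < f₁ := lt_trans h0 h21
  have hFmeas : Measurable (fun p : ℝ × ℝ =>
      p.1^3 / ((1 + p.2^2*p.1^2) * Real.sqrt ((f₁^2 - p.1^2) * (p.1^2 - f₂^2)))) := by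
    apply Measurable.div
    · exact measurable_fst.pow_const 3
    · exact ((measurable_const.add ((measurable_snd.pow_const 2).mul
        (measurable_fst.pow_const 2)))).mul
        (Stmt12AuxC.smeas.measurable.comp measurable_fst)
  haveI : IsFiniteMeasure (volume.restrict (Ioc (0:ℝ) 1)) :=
    ⟨by rw [Measure.restrict_apply_univ]; exact measure_Ioc_lt_top⟩
  have hgInt : Integrable (fun q => f₁^3 * (1 / Real.sqrt ((f₁^2 - q^2) * (q^2 - f₂^2))))
      (volume.restrict (Ioc f₂ f₁)) :=
    ((Stmt12AuxB.g_integrable h0 h21).1).const_mul (f₁^3)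
  have hInt : Integrable (Function.uncurry (fun q t =>
      q^3 / ((1 + t^2*q^2) * Real.sqrt ((f₁^2 - q^2) * (q^2 - f₂^2)))))
      ((volume.restrict (Ioc f₂ f₁)).prod (volume.restrict (Ioc (0:ℝ) 1))) := by
    have hig : Integrable (fun p : ℝ × ℝ =>
        f₁^3 * (1 / Real.sqrt ((f₁^2 - p.1^2) * (p.1^2 - f₂^2))))
        ((volume.restrict (Ioc f₂ f₁)).prod (volume.restrict (Ioc (0:ℝ) 1))) := by
      have := Integrable.mul_prod (μ := volume.restrict (Ioc f₂ f₁))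
        (ν := volume.restrict (Ioc (0:ℝ) 1)) hgInt (integrable_const (1:ℝ))
      simpa using this
    apply Integrable.mono' hig hFmeas.aestronglyMeasurable
    rw [Measure.prod_restrict]
    filter_upwards [ae_restrict_mem (measurableSet_Ioc.prod measurableSet_Ioc)] with p hp
    obtain ⟨hp1, hp2⟩ := hp
    show ‖p.1^3 / ((1 + p.2^2*p.1^2) * Real.sqrt ((f₁^2 - p.1^2) * (p.1^2 - f₂^2)))‖ ≤ f₁^3 * (1 / Real.sqrt ((f₁^2 - p.1^2) * (p.1^2 - f₂^2)))
    have hq0 : 0 < p.1 := lt_trans h0 hp1.1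
    have hs : 0 ≤ Real.sqrt ((f₁^2 - p.1^2) * (p.1^2 - f₂^2)) := Real.sqrt_nonneg _
    have hden : (0:ℝ) < 1 + p.2^2*p.1^2 := by positivity
    rw [Real.norm_eq_abs, abs_of_nonneg (by positivity), mul_one_div]
    rcases eq_or_lt_of_le hs with hs0 | hs0
    · rw [← hs0, mul_zero, div_zero, div_zero]
    · calc p.1^3 / ((1 + p.2^2*p.1^2) * Real.sqrt ((f₁^2 - p.1^2) * (p.1^2 - f₂^2)))
          ≤ f₁^3 / (1 * Real.sqrt ((f₁^2 - p.1^2) * (p.1^2 - f₂^2))) := by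
            apply div_le_div₀ (by positivity) (pow_le_pow_left₀ hq0.le hp1.2 3) (by positivity)
            apply mul_le_mul_of_nonneg_right _ hs
            nlinarith [sq_nonneg (p.2*p.1)]
        _ = f₁^3 / Real.sqrt ((f₁^2 - p.1^2) * (p.1^2 - f₂^2)) := by rw [one_mul]
  calc (∫ q in f₂..f₁, q^2 * Real.arctan q / Real.sqrt ((f₁^2 - q^2) * (q^2 - f₂^2)))
      = ∫ q in f₂..f₁, ∫ t in (0:ℝ)..1,
          q^3 / ((1 + t^2*q^2) * Real.sqrt ((f₁^2 - q^2) * (q^2 - f₂^2))) := by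
        apply intervalIntegral.integral_congr
        intro q _
        have e1 : ∀ t : ℝ, q^3 / ((1 + t^2*q^2) * Real.sqrt ((f₁^2 - q^2) * (q^2 - f₂^2)))
            = (q^2 / Real.sqrt ((f₁^2 - q^2) * (q^2 - f₂^2))) * (q / (1 + t^2*q^2)) := by
          intro t
          rw [div_mul_div_comm, mul_comm (Real.sqrt ((f₁^2 - q^2) * (q^2 - f₂^2))) (1 + t^2*q^2),
            ← pow_succ]
        simp only [e1]
        rw [intervalIntegral.integral_const_mul, Stmt12AuxA.arctan_eq_integral q,
          div_mul_eq_mul_div]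
    _ = ∫ q in Ioc f₂ f₁, ∫ t in Ioc (0:ℝ) 1,
          q^3 / ((1 + t^2*q^2) * Real.sqrt ((f₁^2 - q^2) * (q^2 - f₂^2))) := by
        rw [intervalIntegral.integral_of_le h21.le]
        simp only [intervalIntegral.integral_of_le (zero_le_one (α := ℝ))]
    _ = ∫ t in Ioc (0:ℝ) 1, ∫ q in Ioc f₂ f₁,
          q^3 / ((1 + t^2*q^2) * Real.sqrt ((f₁^2 - q^2) * (q^2 - f₂^2))) :=
        MeasureTheory.integral_integral_swap hInt
    _ = ∫ t in Ioc (0:ℝ) 1,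
          Real.pi/2 * ((1 - 1/(Real.sqrt (1 + f₂^2*t^2) * Real.sqrt (1 + f₁^2*t^2))) / t^2) := by
        apply MeasureTheory.setIntegral_congr_fun measurableSet_Ioc
        intro t ht
        have := Stmt12AuxE.inner_eval h0 h21 (f₁ := f₁) (f₂ := f₂) ht.1
        rw [intervalIntegral.integral_of_le h21.le] at this
        exact this
    _ = ∫ t in (0:ℝ)..1,
          Real.pi/2 * ((1 - 1/(Real.sqrt (1 + f₂^2*t^2) * Real.sqrt (1 + f₁^2*t^2))) / t^2) :=
        (intervalIntegral.integral_of_le (zero_le_one (α := ℝ))).symm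

end Stmt12AuxF

namespace Stmt12AuxG

variable {f₁ f₂ : ℝ}

lemma sub_ellipticE (h0 : 0 < f₂) (h21 : f₂ < f₁) (φb kb : ℝ) (hφb : φb = Real.arctan f₁)
    (hkb : kb = Real.sqrt (1 - f₂ ^ 2 / f₁ ^ 2)) :
    f₁ * ellipticE φb kb
      = ∫ t in (0:ℝ)..1, f₁^2 * Real.sqrt (1 + f₂^2*t^2)
          / ((1 + f₁^2*t^2) * Real.sqrt (1 + f₁^2*t^2)) := by
  have hf1 : 0 < f₁ := lt_trans h0 h21
  have hkb2 : kb^2 = 1 - f₂^2/f₁^2 := by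
    rw [hkb]
    apply Real.sq_sqrt
    rw [sub_nonneg, div_le_one (by positivity)]
    nlinarith
  have hg : Continuous (fun θ : ℝ => (1 - kb^2 * Real.sin θ^2) ^ ((1:ℝ)/2)) := by
    apply Continuous.rpow_const (by continuity)
    intro x
    right; norm_num
  have hder : ∀ t ∈ uIcc (0:ℝ) 1, HasDerivAt (fun t : ℝ => Real.arctan (f₁*t))
      (f₁/(1 + f₁^2*t^2)) t := by
    intro t _
    have h1 : HasDerivAt (fun t : ℝ => f₁*t) f₁ t := by
      simpa using (hasDerivAt_id t).const_mul f₁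
    have h2 := (Real.hasDerivAt_arctan (f₁*t)).comp t h1
    refine h2.congr_deriv (Eq.symm ?_)
    rw [mul_pow, one_div, inv_mul_eq_div]
  have hcont : ContinuousOn (fun t : ℝ => f₁/(1 + f₁^2*t^2)) (uIcc (0:ℝ) 1) := by
    apply Continuous.continuousOn
    exact continuous_const.div (by continuity) (fun t => by positivity)
  have hsub := intervalIntegral.integral_comp_smul_deriv hder hcont hg
  have hE : ellipticE φb kb
      = ∫ t in (0:ℝ)..1, (f₁/(1 + f₁^2*t^2)) • ((1 - kb^2 * Real.sin (Real.arctan (f₁*t))^2) ^ ((1:ℝ)/2)) := by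
    rw [ellipticE, hφb]
    simp only [mul_zero, Real.arctan_zero, mul_one] at hsub
    rw [← hsub]
    simp only [Function.comp_apply]
  rw [hE, ← intervalIntegral.integral_const_mul]
  apply intervalIntegral.integral_congr
  intro t _
  simp only [smul_eq_mul]
  have e1 : 1 - kb^2 * Real.sin (Real.arctan (f₁*t))^2 = (1 + f₂^2*t^2)/(1 + f₁^2*t^2) := by
    rw [Real.sin_arctan, hkb2, div_pow, Real.sq_sqrt (by positivity : (0:ℝ) ≤ 1 + (f₁*t)^2)]
    have h3 : (1:ℝ) + (f₁*t)^2 ≠ 0 := by positivity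
    have h4 : (1:ℝ) + f₁^2*t^2 ≠ 0 := by positivity
    field_simp
    ring
  rw [e1, ← Real.sqrt_eq_rpow, Real.sqrt_div (by positivity : (0:ℝ) ≤ 1 + f₂^2*t^2)]
  have hs2 : (0:ℝ) < Real.sqrt (1 + f₁^2*t^2) := Real.sqrt_pos.2 (by positivity)
  have h4 : (1:ℝ) + f₁^2*t^2 ≠ 0 := by positivity
  field_simp

end Stmt12AuxG

namespace Stmt12AuxH

variable {f₁ f₂ : ℝ}

lemma Bterm_cont : Continuous (fun t : ℝ =>
    f₁^2 * Real.sqrt (1 + f₂^2*t^2) / ((1 + f₁^2*t^2) * Real.sqrt (1 + f₁^2*t^2))) := by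
  apply Continuous.div
  · exact continuous_const.mul (Real.continuous_sqrt.comp (by continuity))
  · exact (by continuity : Continuous fun t:ℝ => (1+f₁^2*t^2)).mul
      (Real.continuous_sqrt.comp (by continuity))
  · intro t
    have h1 : (0:ℝ) < Real.sqrt (1 + f₁^2*t^2) := Real.sqrt_pos.2 (by positivity)
    positivity

lemma enorm_int (h0 : 0 < f₂) (h21 : f₂ < f₁) :
    IntervalIntegrable (fun t =>
      (1 - 1/(Real.sqrt (1 + f₂^2*t^2) * Real.sqrt (1 + f₁^2*t^2)))/t^2) volume 0 1 := by
  rw [intervalIntegrable_iff, uIoc_of_le zero_le_one]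
  apply Integrable.mono' (integrable_const (f₂^2 + f₁^2 + f₂^2*f₁^2))
  · apply Measurable.aestronglyMeasurable
    apply Measurable.div
    · exact measurable_const.sub (measurable_const.div
        (((Real.continuous_sqrt.comp (by continuity)).measurable).mul
          ((Real.continuous_sqrt.comp (by continuity)).measurable)))
    · exact measurable_id.pow_const 2
  · filter_upwards [ae_restrict_mem measurableSet_Ioc] with t ht
    have ht0 : 0 < t := ht.1
    have hs1p : (0:ℝ) < Real.sqrt (1 + f₂^2*t^2) := Real.sqrt_pos.2 (by positivity)
    have hs2p : (0:ℝ) < Real.sqrt (1 + f₁^2*t^2) := Real.sqrt_pos.2 (by positivity)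
    have h11 : (1:ℝ) ≤ Real.sqrt (1 + f₂^2*t^2) := by
      have := Real.sqrt_le_sqrt (by nlinarith : (1:ℝ) ≤ 1 + f₂^2*t^2)
      rwa [Real.sqrt_one] at this
    have h12 : (1:ℝ) ≤ Real.sqrt (1 + f₁^2*t^2) := by
      have := Real.sqrt_le_sqrt (by nlinarith : (1:ℝ) ≤ 1 + f₁^2*t^2)
      rwa [Real.sqrt_one] at this
    set u : ℝ := Real.sqrt (1 + f₂^2*t^2) * Real.sqrt (1 + f₁^2*t^2) with hu
    have hu1 : 1 ≤ u := by
      rw [hu]; nlinarith [mul_nonneg (sub_nonneg.2 h11) (sub_nonneg.2 h12)]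
    have huinv : 1/u ≤ 1 := by rw [div_le_one (by linarith)]; linarith
    have hnn : 0 ≤ (1 - 1/u)/t^2 := by
      apply div_nonneg (by linarith) (by positivity)
    rw [Real.norm_eq_abs, abs_of_nonneg hnn]
    have hu2 : u^2 = (1 + f₂^2*t^2) * (1 + f₁^2*t^2) := by
      rw [hu, mul_pow, Real.sq_sqrt (by positivity), Real.sq_sqrt (by positivity)]
    have e1 : 1 - 1/u = (u - 1)/u := by field_simp
    have e2 : (u - 1)/u ≤ u - 1 := div_le_self (by linarith) hu1
    have e3 : u ≤ u^2 := by nlinarith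
    have ht2 : t^2 ≤ 1 := by nlinarith [ht.2]
    have e5 : f₂^2*f₁^2*t^2*t^2 ≤ f₂^2*f₁^2*t^2 := by
      have h6 := mul_le_mul_of_nonneg_left ht2 (by positivity : (0:ℝ) ≤ f₂^2*f₁^2*t^2)
      nlinarith [h6]
    have e4 : u - 1 ≤ (f₂^2 + f₁^2 + f₂^2*f₁^2)*t^2 := by nlinarith [hu2, e3, e5]
    rw [div_le_iff₀ (by positivity : (0:ℝ) < t^2)]
    calc 1 - 1/u = (u-1)/u := e1
      _ ≤ u - 1 := e2
      _ ≤ (f₂^2 + f₁^2 + f₂^2*f₁^2)*t^2 := e4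

lemma outer (h0 : 0 < f₂) (h21 : f₂ < f₁) :
    ∫ t in (0:ℝ)..1, ((1 - 1/(Real.sqrt (1 + f₂^2*t^2) * Real.sqrt (1 + f₁^2*t^2)))/t^2
        - f₁^2 * Real.sqrt (1 + f₂^2*t^2) / ((1 + f₁^2*t^2) * Real.sqrt (1 + f₁^2*t^2)))
      = Real.sqrt (1 + f₂^2)/Real.sqrt (1 + f₁^2) - 1 := by
  have hint := (enorm_int h0 h21).sub ((Bterm_cont (f₁ := f₁) (f₂ := f₂)).intervalIntegrable 0 1)
  have hderiv : ∀ t ∈ Ioo (0:ℝ) 1,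
      HasDerivAt (fun t => (Real.sqrt (1 + f₂^2*t^2)/Real.sqrt (1 + f₁^2*t^2) - 1)/t)
        ((1 - 1/(Real.sqrt (1 + f₂^2*t^2) * Real.sqrt (1 + f₁^2*t^2)))/t^2
          - f₁^2 * Real.sqrt (1 + f₂^2*t^2) / ((1 + f₁^2*t^2) * Real.sqrt (1 + f₁^2*t^2))) t := by
    intro t htt
    have ht0 : 0 < t := htt.1
    have hA : (0:ℝ) < 1 + f₂^2*t^2 := by positivity
    have hB : (0:ℝ) < 1 + f₁^2*t^2 := by positivity
    have hs1p : (0:ℝ) < Real.sqrt (1 + f₂^2*t^2) := Real.sqrt_pos.2 hA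
    have hs2p : (0:ℝ) < Real.sqrt (1 + f₁^2*t^2) := Real.sqrt_pos.2 hB
    have hs12 : Real.sqrt (1 + f₂^2*t^2)^2 = 1 + f₂^2*t^2 := Real.sq_sqrt hA.le
    have hs22 : Real.sqrt (1 + f₁^2*t^2)^2 = 1 + f₁^2*t^2 := Real.sq_sqrt hB.le
    have h1 : HasDerivAt (fun t : ℝ => 1 + f₂^2*t^2) (f₂^2*(2*t)) t := by
      have h := ((hasDerivAt_pow 2 t).const_mul (f₂^2)).const_add 1
      refine h.congr_deriv (Eq.symm ?_)
      push_cast; ring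
    have h2 : HasDerivAt (fun t : ℝ => 1 + f₁^2*t^2) (f₁^2*(2*t)) t := by
      have h := ((hasDerivAt_pow 2 t).const_mul (f₁^2)).const_add 1
      refine h.congr_deriv (Eq.symm ?_)
      push_cast; ring
    have hsq1 := h1.sqrt hA.ne'
    have hsq2 := h2.sqrt hB.ne'
    have hdiv := (hsq1.div hsq2 hs2p.ne').sub_const 1
    have hfin := hdiv.div (hasDerivAt_id t) ht0.ne'
    refine hfin.congr_deriv (Eq.symm ?_)
    have hne1 : Real.sqrt (1 + f₂^2*t^2) ≠ 0 := hs1p.ne'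
    have hne2 : Real.sqrt (1 + f₁^2*t^2) ≠ 0 := hs2p.ne'
    simp only [id, Pi.div_apply]
    generalize Real.sqrt (1 + f₂^2*t^2) = a at hne1 hs12 ⊢
    generalize Real.sqrt (1 + f₁^2*t^2) = b at hne2 hs22 ⊢
    field_simp
    linear_combination ((1+t^2*f₁^2)^2) * hs12
      + (-(1+t^2*f₁^2) - a^2*t^2*f₁^2 - (1+t^2*f₁^2)*t^2*f₂^2 + (1+t^2*f₁^2)*a^2) * hs22
  have ha : Tendsto (fun t => (Real.sqrt (1 + f₂^2*t^2)/Real.sqrt (1 + f₁^2*t^2) - 1)/t)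
      (𝓝[>] (0:ℝ)) (𝓝 0) := by
    have hVc : Continuous (fun t : ℝ => t*(f₂^2 - f₁^2)
        / (Real.sqrt (1 + f₁^2*t^2) * (Real.sqrt (1 + f₂^2*t^2) + Real.sqrt (1 + f₁^2*t^2)))) := by
      apply Continuous.div (by continuity)
      · exact (Real.continuous_sqrt.comp (by continuity)).mul
          ((Real.continuous_sqrt.comp (by continuity)).add (Real.continuous_sqrt.comp (by continuity)))
      · intro t
        have p1 : (0:ℝ) < Real.sqrt (1 + f₁^2*t^2) := Real.sqrt_pos.2 (by positivity)
        have p2 : (0:ℝ) < Real.sqrt (1 + f₂^2*t^2) := Real.sqrt_pos.2 (by positivity)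
        positivity
    have hV0 : (fun t : ℝ => t*(f₂^2 - f₁^2)
        / (Real.sqrt (1 + f₁^2*t^2) * (Real.sqrt (1 + f₂^2*t^2) + Real.sqrt (1 + f₁^2*t^2)))) 0 = 0 := by
      simp
    have hVt : Tendsto (fun t : ℝ => t*(f₂^2 - f₁^2)
        / (Real.sqrt (1 + f₁^2*t^2) * (Real.sqrt (1 + f₂^2*t^2) + Real.sqrt (1 + f₁^2*t^2))))
        (𝓝[>] (0:ℝ)) (𝓝 0) := by
      have h := ((hVc.tendsto 0).mono_left (nhdsWithin_le_nhds (s := Ioi (0:ℝ))))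
      simpa using h
    apply hVt.congr'
    filter_upwards [self_mem_nhdsWithin] with t (ht : t ∈ Ioi (0:ℝ))
    have ht0 : (0:ℝ) < t := ht
    have hA : (0:ℝ) < 1 + f₂^2*t^2 := by positivity
    have hB : (0:ℝ) < 1 + f₁^2*t^2 := by positivity
    have hs1p : (0:ℝ) < Real.sqrt (1 + f₂^2*t^2) := Real.sqrt_pos.2 hA
    have hs2p : (0:ℝ) < Real.sqrt (1 + f₁^2*t^2) := Real.sqrt_pos.2 hB
    have hs12 : Real.sqrt (1 + f₂^2*t^2)^2 = 1 + f₂^2*t^2 := Real.sq_sqrt hA.le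
    have hs22 : Real.sqrt (1 + f₁^2*t^2)^2 = 1 + f₁^2*t^2 := Real.sq_sqrt hB.le
    generalize Real.sqrt (1 + f₂^2*t^2) = a at hs1p hs12 ⊢
    generalize Real.sqrt (1 + f₁^2*t^2) = b at hs2p hs22 ⊢
    field_simp
    linear_combination hs22 - hs12
  have hb : Tendsto (fun t => (Real.sqrt (1 + f₂^2*t^2)/Real.sqrt (1 + f₁^2*t^2) - 1)/t)
      (𝓝[<] (1:ℝ)) (𝓝 (Real.sqrt (1 + f₂^2)/Real.sqrt (1 + f₁^2) - 1)) := by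
    have hc : ContinuousAt (fun t => (Real.sqrt (1 + f₂^2*t^2)/Real.sqrt (1 + f₁^2*t^2) - 1)/t) 1 := by
      apply ContinuousAt.div
      · apply Continuous.continuousAt
        apply Continuous.sub _ continuous_const
        apply Continuous.div (Real.continuous_sqrt.comp (by continuity))
          (Real.continuous_sqrt.comp (by continuity))
        intro t
        exact (Real.sqrt_pos.2 (by positivity : (0:ℝ) < 1 + f₁^2*t^2)).ne'
      · exact continuousAt_id
      · norm_num
    have h := (hc.tendsto).mono_left (nhdsWithin_le_nhds (s := Iio (1:ℝ)))
    simp only [one_pow, mul_one, div_one] at h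
    exact h
  have heval := intervalIntegral.integral_eq_sub_of_hasDerivAt_of_tendsto zero_lt_one
    hderiv hint ha hb
  rw [heval]
  ring

end Stmt12AuxH

theorem stmt_12 (f₁ f₂ : ℝ) (h0 : 0 < f₂) (h21 : f₂ < f₁)
    (φb kb : ℝ) (hφb : φb = Real.arctan f₁)
    (hkb : kb = Real.sqrt (1 - f₂ ^ 2 / f₁ ^ 2)) :
    (∫ q in f₂..f₁,
        q ^ 2 * Real.arctan q / Real.sqrt ((f₁ ^ 2 - q ^ 2) * (q ^ 2 - f₂ ^ 2)))
      = Real.pi / 2 * f₁ * ellipticE φb kb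
        - Real.pi / 2 * (1 - Real.sqrt (1 - kb ^ 2 * Real.sin φb ^ 2)) := by
  have hf1 : 0 < f₁ := lt_trans h0 h21
  have hkb2 : kb^2 = 1 - f₂^2/f₁^2 := by
    rw [hkb]
    apply Real.sq_sqrt
    rw [sub_nonneg, div_le_one (by positivity)]
    nlinarith
  have hval : Real.sqrt (1 - kb^2 * Real.sin φb^2)
      = Real.sqrt (1 + f₂^2) / Real.sqrt (1 + f₁^2) := by
    have e1 : 1 - kb^2 * Real.sin φb^2 = (1 + f₂^2)/(1 + f₁^2) := by
      rw [hφb, Real.sin_arctan, hkb2, div_pow,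
        Real.sq_sqrt (by positivity : (0:ℝ) ≤ 1 + f₁^2)]
      have h3 : (1:ℝ) + f₁^2 ≠ 0 := by positivity
      field_simp
      ring
    rw [e1, Real.sqrt_div (by positivity : (0:ℝ) ≤ 1 + f₂^2)]
  have hE := Stmt12AuxG.sub_ellipticE h0 h21 φb kb hφb hkb
  have hBint : IntervalIntegrable (fun t : ℝ =>
      f₁^2 * Real.sqrt (1 + f₂^2*t^2) / ((1 + f₁^2*t^2) * Real.sqrt (1 + f₁^2*t^2)))
      volume 0 1 :=
    (Stmt12AuxH.Bterm_cont (f₁ := f₁) (f₂ := f₂)).intervalIntegrable (0:ℝ) 1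
  have hsplit : (∫ t in (0:ℝ)..1,
        Real.pi/2 * ((1 - 1/(Real.sqrt (1 + f₂^2*t^2) * Real.sqrt (1 + f₁^2*t^2))) / t^2))
      = Real.pi/2 * ((Real.sqrt (1 + f₂^2)/Real.sqrt (1 + f₁^2) - 1)
          + f₁ * ellipticE φb kb) := by
    rw [intervalIntegral.integral_const_mul]
    congr 1
    calc (∫ t in (0:ℝ)..1, (1 - 1/(Real.sqrt (1 + f₂^2*t^2) * Real.sqrt (1 + f₁^2*t^2))) / t^2)
        = ∫ t in (0:ℝ)..1,
            (((1 - 1/(Real.sqrt (1 + f₂^2*t^2) * Real.sqrt (1 + f₁^2*t^2))) / t^2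
              - f₁^2 * Real.sqrt (1 + f₂^2*t^2) / ((1 + f₁^2*t^2) * Real.sqrt (1 + f₁^2*t^2)))
            + f₁^2 * Real.sqrt (1 + f₂^2*t^2) / ((1 + f₁^2*t^2) * Real.sqrt (1 + f₁^2*t^2))) := by
          apply intervalIntegral.integral_congr
          intro t _
          ring
      _ = (∫ t in (0:ℝ)..1,
            ((1 - 1/(Real.sqrt (1 + f₂^2*t^2) * Real.sqrt (1 + f₁^2*t^2))) / t^2
              - f₁^2 * Real.sqrt (1 + f₂^2*t^2) / ((1 + f₁^2*t^2) * Real.sqrt (1 + f₁^2*t^2))))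
          + ∫ t in (0:ℝ)..1,
              f₁^2 * Real.sqrt (1 + f₂^2*t^2) / ((1 + f₁^2*t^2) * Real.sqrt (1 + f₁^2*t^2)) :=
          intervalIntegral.integral_add ((Stmt12AuxH.enorm_int h0 h21).sub hBint) hBint
      _ = (Real.sqrt (1 + f₂^2)/Real.sqrt (1 + f₁^2) - 1) + f₁ * ellipticE φb kb := by
          rw [Stmt12AuxH.outer h0 h21, ← hE]
  rw [Stmt12AuxF.lhs_eq h0 h21, hsplit, hval]
  ring
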